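/- For a normal location-scale model, the conditional sum-DB prior π^S(μ|σ) = Ca(μ | μ₀, Σ) with Σ = (σ₀⁴+σ⁴)/(σ₀²+σ²) arises as follows: the symmetrized KL divergence between N(μ,σ²) and N(μ₀,σ₀²) per observation equals D̄^S = (1/2)(σ²/σ₀² + σ₀²/σ² - 2) + (μ-μ₀)²(σ₀²+σ²)/(2σ₀²σ²), and for fixed σ, (1 + D̄^S)^{-1} as a function of μ is proportional to a Cauchy density centered at μ₀ with scale parameter √Σ' for appropriate Σ'. -/

import Mathlib

open Real

/-- Directed KL divergence between `N(μ₁,σ₁²)` and `N(μ₂,σ₂²)`. -/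
noncomputable def normKL (μ₁ σ₁ μ₂ σ₂ : ℝ) : ℝ :=
  Real.log (σ₂ / σ₁) + (σ₁^2 + (μ₁ - μ₂)^2) / (2 * σ₂^2) - 1/2

/-- The log terms of the two directions cancel. -/
theorem normKL_add_normKL {σ₁ σ₂ : ℝ} (h₁ : σ₁ ≠ 0) (h₂ : σ₂ ≠ 0) (μ₁ μ₂ : ℝ) :
    normKL μ₁ σ₁ μ₂ σ₂ + normKL μ₂ σ₂ μ₁ σ₁ =
      (1/2) * (σ₁^2/σ₂^2 + σ₂^2/σ₁^2 - 2)
        + (μ₁ - μ₂)^2 * (σ₂^2 + σ₁^2) / (2 * σ₂^2 * σ₁^2) := by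
  have hsq : (μ₂ - μ₁)^2 = (μ₁ - μ₂)^2 := by ring
  unfold normKL
  rw [hsq, Real.log_div h₂ h₁, Real.log_div h₁ h₂]
  field_simp
  ring

theorem inv_add_mul_eq_inv_mul_inv_one_add_div {K : Type*} [Field K] {a : K} (ha : a ≠ 0)
    (b t : K) : (a + b * t)⁻¹ = a⁻¹ * (1 + t / (a / b))⁻¹ := by
  rw [div_div_eq_mul_div, ← mul_inv, mul_add, mul_one, mul_div_cancel₀ _ ha, mul_comm t]

/-- For the normal location-scale model, the symmetrized KL divergence per
observation equals
`D̄^S = (1/2)(σ²/σ₀² + σ₀²/σ² - 2) + (μ-μ₀)²(σ₀²+σ²)/(2σ₀²σ²)`, and for fixed `σ`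
the kernel `(1+D̄^S)⁻¹`, as a function of `μ`, is proportional to a Cauchy density
centered at `μ₀` with squared scale `Σ = (σ₀⁴+σ⁴)/(σ₀²+σ²)`. -/
theorem normal_sumDB_conditional_Cauchy (μ₀ σ₀ σ : ℝ) (hσ₀ : 0 < σ₀) (hσ : 0 < σ) :
    (∀ μ : ℝ, normKL μ σ μ₀ σ₀ + normKL μ₀ σ₀ μ σ =
      (1/2) * (σ^2/σ₀^2 + σ₀^2/σ^2 - 2)
        + (μ - μ₀)^2 * (σ₀^2 + σ^2) / (2 * σ₀^2 * σ^2)) ∧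
    ∃ C : ℝ, 0 < C ∧ ∀ μ : ℝ,
      (1 + ((1/2) * (σ^2/σ₀^2 + σ₀^2/σ^2 - 2)
          + (μ - μ₀)^2 * (σ₀^2 + σ^2) / (2 * σ₀^2 * σ^2)))⁻¹
        = C * (1 + (μ - μ₀)^2 / ((σ₀^4 + σ^4) / (σ₀^2 + σ^2)))⁻¹ := by
  refine ⟨fun μ => normKL_add_normKL hσ.ne' hσ₀.ne' μ μ₀, ?_⟩
  have ha : 1 + (1/2) * (σ^2/σ₀^2 + σ₀^2/σ^2 - 2) = (σ₀^4 + σ^4) / (2 * σ₀^2 * σ^2) := by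
    field_simp
    ring
  set a := (σ₀^4 + σ^4) / (2 * σ₀^2 * σ^2)
  set b := (σ₀^2 + σ^2) / (2 * σ₀^2 * σ^2)
  have hab : a / b = (σ₀^4 + σ^4) / (σ₀^2 + σ^2) := by
    rw [div_div_div_cancel_right₀ (by positivity)]
  refine ⟨a⁻¹, by positivity, fun μ => ?_⟩
  rw [← hab, ← inv_add_mul_eq_inv_mul_inv_one_add_div (by positivity), ← add_assoc, ha,
    mul_div_assoc, mul_comm b]
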